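/- Let X be an irreducible projective scheme of dimension n ≥ 1 with ample and globally generated line bundle O_X(h), and let E be an h-instanton sheaf on X with defect δ and quantum number q. Then E has natural cohomology with respect to O_X(h) in shifts δ−n ≤ t ≤ −1; in particular q = −χ(E(−h)) = (−1)^{n−1} χ(E((δ−n)h)). -/
import Mathlib


/-- Abstract cohomological data of a projective scheme `X` of dimension `n` over an
algebraically closed field, endowed with a line bundle `O_X(h)`, recorded through the
collection of its coherent sheaves, the twisting operation `E ↦ E(t·h)`, and the
cohomology dimensions `h^i`. The geometric hypotheses (irreducibility, projectivity,
ampleness and global generation of `O_X(h)`) are recorded as propositional fields. -/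
structure InstantonSetting : Type 1 where
  /-- the dimension `n` of `X` -/
  n : ℕ
  /-- coherent sheaves on `X` -/
  Sheaf : Type
  /-- twist: `E ↦ E(t·h)` -/
  twist : Sheaf → ℤ → Sheaf
  twist_twist : ∀ E s t, twist (twist E s) t = twist E (s + t)
  twist_zero : ∀ E, twist E 0 = E
  /-- `h^i(E) = dim H^i(X, E)` -/
  hdim : ℕ → Sheaf → ℕ
  /-- cohomology vanishes above the dimension of `X` -/
  hdim_gt_dim : ∀ i E, n < i → hdim i E = 0
  /-- `E` is the zero sheaf -/
  IsZero : Sheaf → Prop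
  /-- `X` is irreducible -/
  irreducibleX : Prop
  /-- `O_X(h)` is ample -/
  ampleH : Prop
  /-- `O_X(h)` is globally generated -/
  globallyGeneratedH : Prop

namespace InstantonSetting

variable (V : InstantonSetting)

/-- The Euler characteristic `χ(E) = ∑ᵢ (-1)ⁱ hⁱ(E)`. -/
def chi (E : V.Sheaf) : ℤ :=
  ∑ i ∈ Finset.range (V.n + 1), (-1 : ℤ) ^ i * (V.hdim i E : ℤ)

/-- Definition 1.4 of the paper: `E` is an `h`-instanton sheaf with defect `δ ∈ {0,1}`
and quantum number `q`. -/
def IsInstanton (E : V.Sheaf) (δ q : ℕ) : Prop :=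
  ¬ V.IsZero E ∧ δ ≤ 1 ∧
  (∀ t : ℕ, V.hdim 0 (V.twist E (-((t : ℤ) + 1))) = 0 ∧
      V.hdim V.n (V.twist E ((δ : ℤ) - (V.n : ℤ) + (t : ℤ))) = 0) ∧
  (∀ i t : ℕ, 1 ≤ i → (i : ℤ) ≤ (V.n : ℤ) - 2 →
      V.hdim i (V.twist E (-((i : ℤ) + (t : ℤ) + 1))) = 0 ∧
      V.hdim (V.n - i) (V.twist E ((δ : ℤ) + (t : ℤ) - (V.n : ℤ) + (i : ℤ))) = 0) ∧
  (∀ i : ℕ, 2 ≤ i → (i : ℤ) ≤ (V.n : ℤ) - 2 →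
      δ * V.hdim i (V.twist E (-(i : ℤ))) = 0) ∧
  V.hdim 1 (V.twist E (-1)) = q ∧
  V.hdim (V.n - 1) (V.twist E ((δ : ℤ) - (V.n : ℤ))) = q ∧
  (δ : ℤ) * (V.chi E - (-1 : ℤ) ^ V.n * V.chi (V.twist E (-(V.n : ℤ)))) = 0

end InstantonSetting

namespace InstantonSetting

/-- `E` has natural cohomology in shift `t`: `h^i(E(t·h)) = 0` for all `i` but at most
one. -/
def HasNaturalCohomology (V : InstantonSetting) (E : V.Sheaf) (t : ℤ) : Prop :=
  ∀ i j : ℕ, i ≠ j →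
    V.hdim i (V.twist E t) = 0 ∨ V.hdim j (V.twist E t) = 0

end InstantonSetting

/-- Proposition 4.1. Let `X` be an irreducible projective scheme of
dimension `n ≥ 1` with ample and globally generated `O_X(h)`, and let `E` be an
`h`-instanton sheaf on `X` with defect `δ` and quantum number `q`. Then `E` has natural
cohomology in the shifts `δ - n ≤ t ≤ -1`; in particular
`q = -χ(E(-h)) = (-1)^{n-1}·χ(E((δ-n)h))`. -/
theorem statement5 (V : InstantonSetting) (hn : 1 ≤ V.n)
    (hirr : V.irreducibleX) (hamp : V.ampleH) (hgg : V.globallyGeneratedH)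
    (E : V.Sheaf) (δ q : ℕ) (hE : V.IsInstanton E δ q) :
    (∀ t : ℤ, (δ : ℤ) - (V.n : ℤ) ≤ t → t ≤ -1 → V.HasNaturalCohomology E t) ∧
    (q : ℤ) = -V.chi (V.twist E (-1)) ∧
    (q : ℤ) = (-1 : ℤ) ^ (V.n - 1) * V.chi (V.twist E ((δ : ℤ) - (V.n : ℤ))) := by

  obtain ⟨hne, hδ, hA, hB, hC, hq1, hq2, hχ⟩ := hE
  -- reformulated vanishing lemmas
  have HA0 : ∀ s : ℤ, s ≤ -1 → V.hdim 0 (V.twist E s) = 0 := by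
    intro s hs
    have h := (hA (-s - 1).toNat).1
    rwa [show -(((-s - 1).toNat : ℤ) + 1) = s by
      rw [Int.toNat_of_nonneg (by omega)]; ring] at h
  have HAn : ∀ s : ℤ, (δ : ℤ) - V.n ≤ s → V.hdim V.n (V.twist E s) = 0 := by
    intro s hs
    have h := (hA (s - δ + V.n).toNat).2
    rwa [show (δ : ℤ) - V.n + ((s - δ + V.n).toNat : ℤ) = s by
      rw [Int.toNat_of_nonneg (by omega)]; ring] at h
  have HB1 : ∀ (i : ℕ) (s : ℤ), 1 ≤ i → (i : ℤ) ≤ (V.n : ℤ) - 2 → s ≤ -(i : ℤ) - 1 →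
      V.hdim i (V.twist E s) = 0 := by
    intro i s h1 h2 hs
    have h := (hB i (-s - i - 1).toNat h1 h2).1
    rwa [show -((i : ℤ) + ((-s - i - 1).toNat : ℤ) + 1) = s by
      rw [Int.toNat_of_nonneg (by omega)]; ring] at h
  have HB2 : ∀ (i : ℕ) (s : ℤ), 1 ≤ i → (i : ℤ) ≤ (V.n : ℤ) - 2 →
      (δ : ℤ) - V.n + i ≤ s → V.hdim (V.n - i) (V.twist E s) = 0 := by
    intro i s h1 h2 hs
    have h := (hB i (s - δ + V.n - i).toNat h1 h2).2
    rwa [show (δ : ℤ) + ((s - δ + V.n - i).toNat : ℤ) - V.n + i = s by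
      rw [Int.toNat_of_nonneg (by omega)]; ring] at h
  have HB2' : ∀ (j : ℕ) (s : ℤ), 2 ≤ j → (j : ℤ) ≤ (V.n : ℤ) - 1 → (δ : ℤ) - j ≤ s →
      V.hdim j (V.twist E s) = 0 := by
    intro j s h2 hjn hs
    have hjn' : j ≤ V.n := by omega
    have h := HB2 (V.n - j) s (by omega) (by
      have : ((V.n - j : ℕ) : ℤ) = (V.n : ℤ) - j := by omega
      omega) (by
      have : ((V.n - j : ℕ) : ℤ) = (V.n : ℤ) - j := by omega
      omega)
    rwa [Nat.sub_sub_self hjn'] at h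
  -- key vanishing lemma
  have key : ∀ t : ℤ, (δ : ℤ) - V.n ≤ t → t ≤ -1 → ∀ i : ℕ,
      ¬(i = 1 ∧ t = -1) → ¬(1 ≤ i ∧ i = V.n - 1 ∧ t = (δ : ℤ) - V.n) →
      V.hdim i (V.twist E t) = 0 := by
    intro t ht1 ht2 i hex1 hex2
    by_cases hgt : V.n < i
    · exact V.hdim_gt_dim i _ hgt
    push_neg at hgt
    by_cases hin : i = V.n
    · subst hin; exact HAn t ht1
    by_cases hi0 : i = 0
    · subst hi0; exact HA0 t ht2
    by_cases hi1 : i = 1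
    · subst hi1
      have htne : t ≠ -1 := fun h => hex1 ⟨rfl, h⟩
      by_cases hn2 : V.n = 2
      · exfalso
        have htne2 : t ≠ (δ : ℤ) - V.n := fun h => hex2 ⟨le_refl 1, by omega, h⟩
        omega
      · have hn3 : 3 ≤ V.n := by omega
        exact HB1 1 t (le_refl 1) (by omega) (by omega)
    · have h2i : 2 ≤ i := by omega
      by_cases hin1 : i = V.n - 1
      · have htne : t ≠ (δ : ℤ) - V.n := fun h => hex2 ⟨by omega, hin1, h⟩
        exact HB2' i t h2i (by omega) (by omega)
      · have hile : i ≤ V.n - 2 := by omega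
        by_cases hle : t ≤ -(i : ℤ) - 1
        · exact HB1 i t (by omega) (by omega) hle
        · by_cases hge : (δ : ℤ) - i ≤ t
          · exact HB2' i t h2i (by omega) hge
          · have hδ1 : δ = 1 := by omega
            have hti : t = -(i : ℤ) := by omega
            have hc := hC i h2i (by omega)
            rw [hδ1, one_mul] at hc
            rw [hti]; exact hc
  refine ⟨?_, ?_, ?_⟩
  · -- natural cohomology
    intro t ht1 ht2 i j hij
    by_cases hi : (i = 1 ∧ t = -1) ∨ (1 ≤ i ∧ i = V.n - 1 ∧ t = (δ : ℤ) - V.n)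
    · by_cases hj : (j = 1 ∧ t = -1) ∨ (1 ≤ j ∧ j = V.n - 1 ∧ t = (δ : ℤ) - V.n)
      · exfalso
        rcases hi with ⟨hi1, hi2⟩ | ⟨hi1, hi2, hi3⟩ <;>
          rcases hj with ⟨hj1, hj2⟩ | ⟨hj1, hj2, hj3⟩ <;> omega
      · exact Or.inr (key t ht1 ht2 j (fun h => hj (Or.inl h)) (fun h => hj (Or.inr h)))
    · exact Or.inl (key t ht1 ht2 i (fun h => hi (Or.inl h)) (fun h => hi (Or.inr h)))
  · -- q = -χ(E(-1))
    have v1 : ∀ i : ℕ, i ≠ 1 → V.hdim i (V.twist E (-1)) = 0 := by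
      intro i hi
      by_cases hi0 : i = 0
      · subst hi0; exact HA0 (-1) (le_refl _)
      by_cases hgt : V.n < i
      · exact V.hdim_gt_dim i _ hgt
      by_cases hin : i = V.n
      · subst hin; exact HAn (-1) (by omega)
      · exact HB2' i (-1) (by omega) (by omega) (by omega)
    have hchi : V.chi (V.twist E (-1)) = -(q : ℤ) := by
      unfold InstantonSetting.chi
      rw [Finset.sum_eq_single 1]
      · rw [hq1]; ring
      · intro b _ hb; rw [v1 b hb]; ring
      · intro h; exact absurd (Finset.mem_range.mpr (by omega)) h
    rw [hchi]; ring
  · -- q = (-1)^(n-1) χ(E(δ-n))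
    have v2 : ∀ i : ℕ, i ≠ V.n - 1 → V.hdim i (V.twist E ((δ : ℤ) - V.n)) = 0 := by
      intro i hi
      by_cases hgt : V.n < i
      · exact V.hdim_gt_dim i _ hgt
      by_cases hin : i = V.n
      · subst hin; exact HAn _ (le_refl _)
      by_cases hi0 : i = 0
      · subst hi0; exact HA0 _ (by omega)
      · exact HB1 i _ (by omega) (by omega) (by omega)
    have hchi : V.chi (V.twist E ((δ : ℤ) - V.n)) = (-1 : ℤ) ^ (V.n - 1) * q := by
      unfold InstantonSetting.chi
      rw [Finset.sum_eq_single (V.n - 1)]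
      · rw [hq2]
      · intro b _ hb; rw [v2 b hb]; ring
      · intro h; exact absurd (Finset.mem_range.mpr (by omega)) h
    rw [hchi, ← mul_assoc, ← pow_add, ← two_mul, pow_mul]
    norm_num
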